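/- If the interval transportation problem is strongly feasible, then the worst optimal value sup { f(c,s,d) : c ∈ [c̲,c̄], s ∈ [s̲,s̄], d ∈ [d̲,d̄] } equals the optimal value of the single scenario (c̄, s̲, d̄), i.e., equals inf { ∑_{i,j} c̄_{ij} x_{ij} : x ≥ 0, ∑_j x_{ij} ≤ s̲_i ∀i, ∑_i x_{ij} = d̄_j ∀j }. -/

import Mathlib

open Finset

def Feas {m n : ℕ} (s : Fin m → ℝ) (d : Fin n → ℝ) (x : Fin m → Fin n → ℝ) : Prop :=
  (∀ i j, 0 ≤ x i j) ∧ (∀ i, ∑ j, x i j ≤ s i) ∧ (∀ j, ∑ i, x i j = d j)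

def IsOptimal {m n : ℕ} (c : Fin m → Fin n → ℝ) (s : Fin m → ℝ) (d : Fin n → ℝ)
    (x : Fin m → Fin n → ℝ) : Prop :=
  Feas s d x ∧ ∀ x', Feas s d x' → ∑ i, ∑ j, c i j * x i j ≤ ∑ i, ∑ j, c i j * x' i j

noncomputable def optVal {m n : ℕ} (c : Fin m → Fin n → ℝ) (s : Fin m → ℝ) (d : Fin n → ℝ) : EReal :=
  sInf ((fun x => ((∑ i, ∑ j, c i j * x i j : ℝ) : EReal)) '' {x | Feas s d x})

/-
Every scenario is dominated by `(chi, slo, dhi)`: a feasible plan for supplies `slo` and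
demands `dhi` is turned into one for `s ≥ slo` and `d ≤ dhi` by scaling column `j` by
`d j / dhi j ≤ 1`, which can only lower its cost, and raising the costs to `chi ≥ 0` only
raises it. The worst scenario is itself admissible, so the supremum is attained there.
-/

section Transportation

variable {m n : ℕ}

theorem Feas.mono_supply {s s' : Fin m → ℝ} {d : Fin n → ℝ} {x : Fin m → Fin n → ℝ}
    (hx : Feas s d x) (hs : s ≤ s') : Feas s' d x :=
  ⟨hx.1, fun i => (hx.2.1 i).trans (hs i), hx.2.2⟩

theorem Feas.exists_le_of_le_demand {s : Fin m → ℝ} {d D : Fin n → ℝ} {x : Fin m → Fin n → ℝ}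
    (hx : Feas s D x) (hd0 : 0 ≤ d) (hd : d ≤ D) :
    ∃ x', Feas s d x' ∧ x' ≤ x := by
  obtain ⟨hx0, hxs, hxD⟩ := hx
  have hratio_nonneg (j : Fin n) : 0 ≤ d j / D j := div_nonneg (hd0 j) ((hd0 j).trans (hd j))
  have hratio_le_one (j : Fin n) : d j / D j ≤ 1 :=
    div_le_one_of_le₀ (hd j) ((hd0 j).trans (hd j))
  have hle (i : Fin m) (j : Fin n) : x i j * (d j / D j) ≤ x i j :=
    mul_le_of_le_one_right (hx0 i j) (hratio_le_one j)
  refine ⟨fun i j => x i j * (d j / D j), ⟨fun i j => mul_nonneg (hx0 i j) (hratio_nonneg j),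
    fun i => (sum_le_sum fun j _ => hle i j).trans (hxs i), fun j => ?_⟩, hle⟩
  rw [← sum_mul, hxD j]
  -- when `D j = 0` the scaling factor is the junk value `d j / 0 = 0`, and indeed `d j = 0`
  rcases eq_or_ne (D j) 0 with hD | hD
  · simp only [hD, zero_mul]
    exact le_antisymm (hd0 j) (by simpa [hD] using hd j)
  · exact mul_div_cancel₀ (d j) hD

theorem cost_le_cost {c C x x' : Fin m → Fin n → ℝ} (hc : c ≤ C) (hC : 0 ≤ C)
    (hx' : 0 ≤ x') (hxx' : x' ≤ x) :
    ∑ i, ∑ j, c i j * x' i j ≤ ∑ i, ∑ j, C i j * x i j :=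
  sum_le_sum fun i _ => sum_le_sum fun j _ =>
    mul_le_mul (hc i j) (hxx' i j) (hx' i j) (hC i j)

theorem optVal_le_cost {c : Fin m → Fin n → ℝ} {s : Fin m → ℝ} {d : Fin n → ℝ}
    {x : Fin m → Fin n → ℝ} (hx : Feas s d x) :
    optVal c s d ≤ ((∑ i, ∑ j, c i j * x i j : ℝ) : EReal) :=
  sInf_le ⟨x, hx, rfl⟩

theorem optVal_mono {c C : Fin m → Fin n → ℝ} {s S : Fin m → ℝ} {d D : Fin n → ℝ}
    (hc : c ≤ C) (hC : 0 ≤ C) (hs : S ≤ s) (hd0 : 0 ≤ d) (hd : d ≤ D) :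
    optVal c s d ≤ optVal C S D := by
  refine le_sInf ?_
  rintro _ ⟨x, hx, rfl⟩
  obtain ⟨x', hx', hx'x⟩ := hx.exists_le_of_le_demand hd0 hd
  calc optVal c s d ≤ ((∑ i, ∑ j, c i j * x' i j : ℝ) : EReal) :=
        optVal_le_cost (hx'.mono_supply hs)
    _ ≤ _ := EReal.coe_le_coe_iff.mpr (cost_le_cost hc hC hx'.1 hx'x)

end Transportation

theorem stmt_14_general {m n : ℕ} (clo chi : Fin m → Fin n → ℝ) (slo shi : Fin m → ℝ)
    (dlo dhi : Fin n → ℝ)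
    (hc0 : ∀ i j, 0 ≤ clo i j) (hc : clo ≤ chi)
    (hs : slo ≤ shi) (hd0 : 0 ≤ dlo) (hd : dlo ≤ dhi) :
    sSup {v : EReal | ∃ c s d, clo ≤ c ∧ c ≤ chi ∧ slo ≤ s ∧ s ≤ shi ∧
        dlo ≤ d ∧ d ≤ dhi ∧ v = optVal c s d} = optVal chi slo dhi := by
  have hchi : 0 ≤ chi := fun i j => (hc0 i j).trans (hc i j)
  refine le_antisymm (sSup_le ?_) (le_sSup ⟨chi, slo, dhi, hc, le_rfl, le_rfl, hs, hd, le_rfl, rfl⟩)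
  rintro _ ⟨c, s, d, -, hc', hs', -, hd', hd'', rfl⟩
  exact optVal_mono hc' hchi hs' (hd0.trans hd') hd''

theorem stmt_14 {m n : ℕ} (clo chi : Fin m → Fin n → ℝ) (slo shi : Fin m → ℝ)
    (dlo dhi : Fin n → ℝ)
    (hc0 : ∀ i j, 0 ≤ clo i j) (hc : clo ≤ chi)
    (hs0 : 0 ≤ slo) (hs : slo ≤ shi) (hd0 : 0 ≤ dlo) (hd : dlo ≤ dhi)
    (hsf : ∑ j, dhi j ≤ ∑ i, slo i) :
    sSup {v : EReal | ∃ c s d, clo ≤ c ∧ c ≤ chi ∧ slo ≤ s ∧ s ≤ shi ∧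
        dlo ≤ d ∧ d ≤ dhi ∧ v = optVal c s d} = optVal chi slo dhi :=
  stmt_14_general clo chi slo shi dlo dhi hc0 hc hs hd0 hd
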